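/- arXiv:2603.01148 — 6 statements merged into one kernel-verified Lean document; each statement's English description precedes it below -/
import Mathlib

section
/- Let p > 3 be a prime, θ a nontrivial additive character of F_p with values in ℂ, and λ ∈ F_p with λ ≠ 0. Then Σ_{y ∈ F_p, y ≠ 0} Σ_{z ∈ F_p, z ≠ 0} θ(z·y² − 3λ·z) = 1 + p·φ(3λ), where φ(3λ) ∈ {1, −1} is regarded as a complex number. -/
theorem char_sum_S1 (p : ℕ) [Fact p.Prime] (hp : 3 < p)
    (θ : AddChar (ZMod p) ℂ) (hθ : θ ≠ 1) (l : ZMod p) (hl : l ≠ 0) :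
    ∑ y ∈ Finset.univ.filter (fun y : ZMod p => y ≠ 0),
      ∑ z ∈ Finset.univ.filter (fun z : ZMod p => z ≠ 0),
        θ (z * y ^ 2 - 3 * l * z) =
      1 + (p : ℂ) * ((quadraticChar (ZMod p) (3 * l) : ℤ) : ℂ) := by
  have hprim : θ.IsPrimitive := AddChar.IsPrimitive.of_ne_one hθ
  have h3 : (3 : ZMod p) ≠ 0 := by
    have : ((3 : ℕ) : ZMod p) ≠ 0 := by
      rw [Ne, ZMod.natCast_eq_zero_iff]
      intro h
      have := Nat.le_of_dvd (by omega) h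
      omega
    simpa using this
  have h3l : (3 : ZMod p) * l ≠ 0 := mul_ne_zero h3 hl
  -- inner sum
  have hinner : ∀ y : ZMod p,
      ∑ z ∈ Finset.univ.filter (fun z : ZMod p => z ≠ 0),
        θ (z * y ^ 2 - 3 * l * z)
      = (if y ^ 2 - 3 * l = 0 then (p : ℂ) else 0) - 1 := by
    intro y
    have key : ∑ z : ZMod p, θ (z * (y ^ 2 - 3 * l))
        = if y ^ 2 - 3 * l = 0 then (p : ℂ) else 0 := by
      rw [AddChar.sum_mulShift _ hprim, ZMod.card]
      split_ifs <;> simp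
    have hsplit : ∑ z : ZMod p, θ (z * (y ^ 2 - 3 * l))
        = θ (0 * (y ^ 2 - 3 * l)) +
          ∑ z ∈ Finset.univ.filter (fun z : ZMod p => z ≠ 0),
            θ (z * (y ^ 2 - 3 * l)) := by
      rw [← Finset.add_sum_erase _ _ (Finset.mem_univ (0 : ZMod p))]
      congr 1
      apply Finset.sum_congr _ (fun _ _ => rfl)
      ext z
      simp [Finset.mem_erase, and_comm]
    have : ∀ z : ZMod p, z * (y ^ 2 - 3 * l) = z * y ^ 2 - 3 * l * z := by
      intro z; ring
    simp only [this] at hsplit key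
    rw [eq_sub_iff_add_eq, add_comm, ← key, hsplit]
    congr 1
    simp
  rw [Finset.sum_congr rfl (fun y _ => hinner y), Finset.sum_sub_distrib,
    Finset.sum_const]
  have hcardfilter :
      (Finset.univ.filter (fun y : ZMod p => y ≠ 0)).card = p - 1 := by
    simp [Finset.filter_ne', ZMod.card]
  -- sum of the if
  have hif : ∑ y ∈ Finset.univ.filter (fun y : ZMod p => y ≠ 0),
      (if y ^ 2 - 3 * l = 0 then (p : ℂ) else 0)
      = (p : ℂ) * ((quadraticChar (ZMod p) (3 * l) : ℤ) + 1 : ℤ) := by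
    rw [← Finset.sum_filter]
    simp only [Finset.sum_const, Finset.filter_filter]
    have hset : Finset.univ.filter (fun y : ZMod p => y ≠ 0 ∧ y ^ 2 - 3 * l = 0)
        = {y : ZMod p | y ^ 2 = 3 * l}.toFinset := by
      ext y
      simp only [Finset.mem_filter, Finset.mem_univ, true_and, Set.mem_toFinset,
        Set.mem_setOf_eq, sub_eq_zero]
      constructor
      · rintro ⟨_, h⟩; exact h
      · intro h
        refine ⟨?_, h⟩
        rintro rfl
        simp only [ne_eq, zero_pow, OfNat.ofNat_ne_zero, not_false_eq_true] at h
        exact h3l h.symm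
    rw [hset]
    have hchar2 : ringChar (ZMod p) ≠ 2 := by
      rw [ZMod.ringChar_zmod_n]
      omega
    have := quadraticChar_card_sqrts hchar2 (3 * l)
    rw [nsmul_eq_mul, mul_comm]
    congr 1
    rw [← this]
    push_cast
    ring
  rw [hif, hcardfilter]
  have hpcast : ((p - 1 : ℕ) : ℂ) = (p : ℂ) - 1 := by
    have : 1 ≤ p := by omega
    push_cast [this]
    ring
  rw [nsmul_eq_mul, hpcast]
  push_cast
  ring
end

section
/- Let p > 3 be a prime and λ ∈ F_p with λ ∉ {0, 1, −1}. Then the map (u, v) ↦ (2(v+1)/u², 4(1 + v + λu²)/u³) is a bijection from the set {(u, v) ∈ F_p × F_p : v² = u⁴ + 2λu² + 1 and u ≠ 0} onto the set {(x, y) ∈ F_p × F_p : y² = x³ + 2λx² − 4x − 8λ and y ≠ 0}. -/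
/-!
The two maps are mutually inverse birational maps between the quartic `v² = u⁴ + 2λu² + 1` and
the cubic `y² = x³ + 2λx² - 4x - 8λ`: the inverse is `(x, y) ↦ (u, x u² / 2 - 1)` with
`u = 2(x + 2λ)/y`. Both maps only divide by quantities that are nonzero on the curves: `y ≠ 0`
forces `x ≠ -2λ`, and on the quartic `1 + v + λu² = 0` would give `(λ² - 1) u⁴ = 0`.
-/

namespace JacobiQuartic

variable {F : Type*} [Field F] {l : F}

def quartic (l : F) : Set (F × F) :=
  {uv | uv.2 ^ 2 = uv.1 ^ 4 + 2 * l * uv.1 ^ 2 + 1 ∧ uv.1 ≠ 0}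

def cubic (l : F) : Set (F × F) :=
  {xy | xy.2 ^ 2 = xy.1 ^ 3 + 2 * l * xy.1 ^ 2 - 4 * xy.1 - 8 * l ∧ xy.2 ≠ 0}

def toCubic (l : F) (uv : F × F) : F × F :=
  (2 * (uv.2 + 1) / uv.1 ^ 2, 4 * (1 + uv.2 + l * uv.1 ^ 2) / uv.1 ^ 3)

def toQuartic (l : F) (xy : F × F) : F × F :=
  (2 * (xy.1 + 2 * l) / xy.2, xy.1 * (2 * (xy.1 + 2 * l) / xy.2) ^ 2 / 2 - 1)

lemma one_add_add_mul_sq_ne_zero (hl1 : l ≠ 1) (hlm1 : l ≠ -1) {u v : F}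
    (huv : (u, v) ∈ quartic l) : 1 + v + l * u ^ 2 ≠ 0 := by
  obtain ⟨hcurve, hu⟩ := huv
  intro h
  have hv : v = -(1 + l * u ^ 2) := by linear_combination h
  have : (l - 1) * (l + 1) * u ^ 4 = 0 := by
    rw [hv] at hcurve
    linear_combination hcurve
  rcases mul_eq_zero.mp this with h' | h'
  · rcases mul_eq_zero.mp h' with h'' | h''
    · exact hl1 (by linear_combination h'')
    · exact hlm1 (by linear_combination h'')
  · exact hu (pow_eq_zero_iff four_ne_zero |>.mp h')

lemma add_two_mul_ne_zero {x y : F} (hxy : (x, y) ∈ cubic l) : x + 2 * l ≠ 0 := by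
  obtain ⟨hcurve, hy⟩ := hxy
  intro h
  have hx : x = -(2 * l) := by linear_combination h
  rw [hx] at hcurve
  exact hy (pow_eq_zero_iff two_ne_zero |>.mp (by linear_combination hcurve))

lemma mapsTo_toCubic (h2 : (2 : F) ≠ 0) (hl1 : l ≠ 1) (hlm1 : l ≠ -1) :
    Set.MapsTo (toCubic l) (quartic l) (cubic l) := by
  rintro ⟨u, v⟩ huv
  have hw := one_add_add_mul_sq_ne_zero hl1 hlm1 huv
  obtain ⟨hcurve, hu⟩ := huv
  have h4 : (4 : F) ≠ 0 := by simpa [show (4 : F) = 2 * 2 by norm_num] using h2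
  refine ⟨?_, div_ne_zero (mul_ne_zero h4 hw) (pow_ne_zero _ hu)⟩
  simp only [toCubic]
  field_simp
  linear_combination (-8 * (v + 1 + l * u ^ 2)) * hcurve

lemma mapsTo_toQuartic (h2 : (2 : F) ≠ 0) : Set.MapsTo (toQuartic l) (cubic l) (quartic l) := by
  rintro ⟨x, y⟩ hxy
  have hw := add_two_mul_ne_zero hxy
  obtain ⟨hcurve, hy⟩ := hxy
  refine ⟨?_, div_ne_zero (mul_ne_zero h2 hw) hy⟩
  simp only [toQuartic]
  field_simp
  linear_combination (-4 * (x + 2 * l) ^ 3) * hcurve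

lemma leftInvOn_toQuartic (h2 : (2 : F) ≠ 0) (hl1 : l ≠ 1) (hlm1 : l ≠ -1) :
    Set.LeftInvOn (toQuartic l) (toCubic l) (quartic l) := by
  rintro ⟨u, v⟩ huv
  have hw := one_add_add_mul_sq_ne_zero hl1 hlm1 huv
  have hu : u ≠ 0 := huv.2
  have hx : 2 * (v + 1) / u ^ 2 + 2 * l = 2 * (1 + v + l * u ^ 2) / u ^ 2 := by
    field_simp
    ring
  have hu' : 2 * (2 * (v + 1) / u ^ 2 + 2 * l) / (4 * (1 + v + l * u ^ 2) / u ^ 3) = u := by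
    rw [hx, show (4 : F) = 2 * 2 by norm_num]
    field_simp
  simp only [toQuartic, toCubic, hu', Prod.mk.injEq, true_and]
  field_simp
  ring

lemma rightInvOn_toQuartic (h2 : (2 : F) ≠ 0) :
    Set.RightInvOn (toQuartic l) (toCubic l) (cubic l) := by
  rintro ⟨x, y⟩ hxy
  have hw := add_two_mul_ne_zero hxy
  have hy : y ≠ 0 := hxy.2
  simp only [toQuartic, toCubic, Prod.mk.injEq]
  constructor
  · field_simp
    ring
  · field_simp
    ring

theorem bijOn_toCubic (h2 : (2 : F) ≠ 0) (hl1 : l ≠ 1) (hlm1 : l ≠ -1) :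
    Set.BijOn (toCubic l) (quartic l) (cubic l) :=
  Set.InvOn.bijOn ⟨leftInvOn_toQuartic h2 hl1 hlm1, rightInvOn_toQuartic h2⟩
    (mapsTo_toCubic h2 hl1 hlm1) (mapsTo_toQuartic h2)

end JacobiQuartic

theorem jacobi_to_weierstrass_bijection_general (p : ℕ) [Fact p.Prime] (hp : 3 < p)
    (l : ZMod p) (hl1 : l ≠ 1) (hlm1 : l ≠ -1) :
    Set.BijOn
      (fun uv : ZMod p × ZMod p =>
        (2 * (uv.2 + 1) / uv.1 ^ 2, 4 * (1 + uv.2 + l * uv.1 ^ 2) / uv.1 ^ 3))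
      {uv : ZMod p × ZMod p | uv.2 ^ 2 = uv.1 ^ 4 + 2 * l * uv.1 ^ 2 + 1 ∧ uv.1 ≠ 0}
      {xy : ZMod p × ZMod p |
        xy.2 ^ 2 = xy.1 ^ 3 + 2 * l * xy.1 ^ 2 - 4 * xy.1 - 8 * l ∧ xy.2 ≠ 0} :=
  JacobiQuartic.bijOn_toCubic (Ring.two_ne_zero (by rw [ZMod.ringChar_zmod_n]; omega)) hl1 hlm1

theorem jacobi_to_weierstrass_bijection (p : ℕ) [Fact p.Prime] (hp : 3 < p)
    (l : ZMod p) (hl0 : l ≠ 0) (hl1 : l ≠ 1) (hlm1 : l ≠ -1) :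
    Set.BijOn
      (fun uv : ZMod p × ZMod p =>
        (2 * (uv.2 + 1) / uv.1 ^ 2, 4 * (1 + uv.2 + l * uv.1 ^ 2) / uv.1 ^ 3))
      {uv : ZMod p × ZMod p | uv.2 ^ 2 = uv.1 ^ 4 + 2 * l * uv.1 ^ 2 + 1 ∧ uv.1 ≠ 0}
      {xy : ZMod p × ZMod p |
        xy.2 ^ 2 = xy.1 ^ 3 + 2 * l * xy.1 ^ 2 - 4 * xy.1 - 8 * l ∧ xy.2 ≠ 0} :=
  jacobi_to_weierstrass_bijection_general p hp l hl1 hlm1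
end

section
/- Let p > 3 be a prime and λ ∈ F_p with λ ∉ {0, 1, −1}. Then #{(u, v) ∈ F_p × F_p : v² = u⁴ + 2λu² + 1} + 1 = #{(x, y) ∈ F_p × F_p : y² = x³ + 2λx² − 4x − 8λ}. -/
/-!
Write `χ` for the quadratic character, so that a curve `y² = g(x)` has `q + ∑ₓ χ(g x)` points.
Substituting `b = u²`, the quartic sum `∑ χ(u⁴ + d u² + 1)` becomes `∑ χ(b (b² + d b + 1))`
minus the character sum of the nondegenerate quadratic `b² + d b + 1`, which is `-1`.
The cubic `x³ + d x² - 4x - 4d` factors as `(x² - 4)(x + d)`, and parametrising the conic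
`y² = x² - 4` by `w ↦ (w + w⁻¹, w⁻¹ - w)` turns its character sum into the same
`∑ χ(w (w² + d w + 1))`.
-/

open Finset

section QuadraticCharSums

variable {F : Type*} [Field F] [Fintype F] [DecidableEq F]

lemma sum_filter_sq_eq (hF : ringChar F ≠ 2) (g : F → F) (f : F → ℤ) :
    ∑ xy ∈ univ.filter (fun xy : F × F => xy.2 ^ 2 = g xy.1), f xy.1 =
      ∑ x, (quadraticChar F (g x) + 1) * f x := by
  rw [sum_filter, Fintype.sum_prod_type]
  refine sum_congr rfl fun x _ => ?_
  dsimp only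
  rw [← sum_filter, sum_const, nsmul_eq_mul, ← quadraticChar_card_sqrts hF]
  congr 3
  ext y
  simp

lemma card_filter_sq_eq (hF : ringChar F ≠ 2) (g : F → F) :
    (#(univ.filter fun xy : F × F => xy.2 ^ 2 = g xy.1) : ℤ) =
      Fintype.card F + ∑ x, quadraticChar F (g x) := by
  have h := sum_filter_sq_eq hF g 1
  simp only [Pi.one_apply, mul_one, sum_const, nsmul_eq_mul, sum_add_distrib] at h
  rw [h, card_univ, add_comm]

lemma sum_comp_sq (hF : ringChar F ≠ 2) (f : F → ℤ) :
    ∑ a, f (a ^ 2) = ∑ b, (quadraticChar F b + 1) * f b := by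
  rw [← sum_fiberwise' univ (fun a : F => a ^ 2) f]
  refine sum_congr rfl fun b _ => ?_
  rw [sum_const, nsmul_eq_mul, ← quadraticChar_card_sqrts hF]
  congr 3
  ext a
  simp

lemma sum_quadraticChar_add (hF : ringChar F ≠ 2) (c : F) :
    ∑ b, quadraticChar F (b + c) = 0 :=
  (Equiv.sum_comp (Equiv.addRight c) (quadraticChar F)).trans (quadraticChar_sum_zero hF)

lemma sum_quadraticChar_mul_add (hF : ringChar F ≠ 2) {c : F} (hc : c ≠ 0) :
    ∑ b, quadraticChar F b * quadraticChar F (b + c) = -1 := by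
  have hJ : jacobiSum (quadraticChar F) (quadraticChar F) = -quadraticChar F (-1) := by
    simpa only [(quadraticChar_isQuadratic F).inv] using
      jacobiSum_nontrivial_inv (quadraticChar_ne_one hF)
  have hc' : -c ≠ 0 := neg_ne_zero.mpr hc
  -- substitute `b = -c x`; the factor `χ(-c) χ(c) = χ(-1)` meets the `χ(-1)` of `J(χ, χ)`
  rw [← Equiv.sum_comp (Equiv.mulLeft₀ (-c) hc')]
  calc ∑ x, quadraticChar F (-c * x) * quadraticChar F (-c * x + c)
      = ∑ x, quadraticChar F (-1) * (quadraticChar F x * quadraticChar F (1 - x)) := by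
        refine sum_congr rfl fun x _ => ?_
        rw [show -c * x + c = c * (1 - x) by ring, map_mul, map_mul,
          show -c = -1 * c by ring, map_mul]
        linear_combination quadraticChar F (-1) * quadraticChar F x *
          quadraticChar F (1 - x) * (quadraticChar_sq_one hc)
    _ = -1 := by
        rw [← mul_sum]
        change _ * jacobiSum _ _ = _
        rw [hJ]
        linear_combination -quadraticChar_sq_one (neg_ne_zero.mpr (one_ne_zero (α := F)))

lemma sum_quadraticChar_quadratic (hF : ringChar F ≠ 2) {d e : F} (h : d ^ 2 - 4 * e ≠ 0) :
    ∑ x, quadraticChar F (x ^ 2 + d * x + e) = -1 := by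
  have h2 : (2 : F) ≠ 0 := Ring.two_ne_zero hF
  set c := e - (d / 2) ^ 2 with hc_def
  have hc : c ≠ 0 := by
    rw [show c = -(d ^ 2 - 4 * e) / (2 * 2) by rw [hc_def]; field_simp; ring]
    exact div_ne_zero (neg_ne_zero.mpr h) (mul_ne_zero h2 h2)
  calc ∑ x, quadraticChar F (x ^ 2 + d * x + e)
      = ∑ x, quadraticChar F ((x + d / 2) ^ 2 + c) := by
        refine sum_congr rfl fun x _ => ?_
        rw [hc_def]; congr 1; field_simp; ring
    _ = ∑ y, quadraticChar F (y ^ 2 + c) :=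
        Equiv.sum_comp (Equiv.addRight (d / 2)) fun y => quadraticChar F (y ^ 2 + c)
    _ = ∑ b, (quadraticChar F b + 1) * quadraticChar F (b + c) :=
        sum_comp_sq hF fun b => quadraticChar F (b + c)
    _ = ∑ b, quadraticChar F b * quadraticChar F (b + c) + ∑ b, quadraticChar F (b + c) := by
        rw [← sum_add_distrib]; simp only [add_mul, one_mul]
    _ = -1 := by
        rw [sum_quadraticChar_mul_add hF hc, sum_quadraticChar_add hF, add_zero]

lemma sum_quadraticChar_quartic (hF : ringChar F ≠ 2) {d : F} (hd : d ^ 2 - 4 ≠ 0) :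
    ∑ u, quadraticChar F (u ^ 4 + d * u ^ 2 + 1) =
      ∑ b, quadraticChar F (b * (b ^ 2 + d * b + 1)) - 1 := by
  calc ∑ u, quadraticChar F (u ^ 4 + d * u ^ 2 + 1)
      = ∑ u, quadraticChar F ((u ^ 2) ^ 2 + d * u ^ 2 + 1) := by simp only [← pow_mul]
    _ = ∑ b, (quadraticChar F b + 1) * quadraticChar F (b ^ 2 + d * b + 1) :=
        sum_comp_sq hF fun b => quadraticChar F (b ^ 2 + d * b + 1)
    _ = ∑ b, quadraticChar F (b * (b ^ 2 + d * b + 1)) +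
          ∑ b, quadraticChar F (b ^ 2 + d * b + 1) := by
        rw [← sum_add_distrib]; simp only [map_mul, add_mul, one_mul]
    _ = _ := by
        rw [sum_quadraticChar_quadratic hF (by rwa [mul_one]), sub_eq_add_neg]

lemma sum_filter_sq_eq_sq_sub_four {M : Type*} [AddCommMonoid M] (hF : ringChar F ≠ 2)
    (f : F → M) :
    ∑ xy ∈ univ.filter (fun xy : F × F => xy.2 ^ 2 = xy.1 ^ 2 - 4), f xy.1 =
      ∑ w ∈ univ.erase 0, f (w + w⁻¹) := by
  have h2 : (2 : F) ≠ 0 := Ring.two_ne_zero hF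
  -- on the conic, `(x - y) (x + y) = 4`
  have hsub : ∀ x y : F, y ^ 2 = x ^ 2 - 4 → x - y ≠ 0 := fun x y hxy h =>
    mul_ne_zero h2 h2 (by linear_combination hxy + (x + y) * h)
  refine (sum_nbij' (fun w => (w + w⁻¹, w⁻¹ - w)) (fun xy => (xy.1 - xy.2) / 2)
    ?_ ?_ ?_ ?_ fun _ _ => rfl).symm
  · intro w hw
    have hw0 : w ≠ 0 := by simpa using hw
    simp only [mem_filter, mem_univ, true_and]
    field_simp
    ring
  · intro xy hxy
    simp only [mem_filter, mem_univ, true_and] at hxy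
    simpa using div_ne_zero (hsub _ _ hxy) h2
  · intro w hw
    have hw0 : w ≠ 0 := by simpa using hw
    field_simp
    ring
  · rintro ⟨x, y⟩ hxy
    simp only [mem_filter, mem_univ, true_and] at hxy
    have hinv : ((x - y) / 2)⁻¹ = (x + y) / 2 := by
      rw [inv_eq_of_mul_eq_one_right]
      field_simp
      linear_combination -hxy
    simp only [hinv, Prod.mk.injEq]
    constructor <;> field_simp <;> ring

lemma sum_quadraticChar_cubic (hF : ringChar F ≠ 2) (d : F) :
    ∑ x, quadraticChar F ((x ^ 2 - 4) * (x + d)) =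
      ∑ w, quadraticChar F (w * (w ^ 2 + d * w + 1)) := by
  calc ∑ x, quadraticChar F ((x ^ 2 - 4) * (x + d))
      = ∑ x, (quadraticChar F (x ^ 2 - 4) + 1) * quadraticChar F (x + d) -
          ∑ x, quadraticChar F (x + d) := by
        rw [← sum_sub_distrib]; simp only [map_mul, add_mul, one_mul, add_sub_cancel_right]
    _ = ∑ xy ∈ univ.filter (fun xy : F × F => xy.2 ^ 2 = xy.1 ^ 2 - 4),
          quadraticChar F (xy.1 + d) := by
        rw [sum_quadraticChar_add hF, sub_zero]
        exact (sum_filter_sq_eq hF (fun x => x ^ 2 - 4) fun x => quadraticChar F (x + d)).symm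
    _ = ∑ w ∈ univ.erase 0, quadraticChar F (w + w⁻¹ + d) :=
        sum_filter_sq_eq_sq_sub_four hF fun x => quadraticChar F (x + d)
    _ = ∑ w ∈ univ.erase 0, quadraticChar F (w * (w ^ 2 + d * w + 1)) := by
        refine sum_congr rfl fun w hw => ?_
        have hw0 : w ≠ 0 := by simpa using hw
        rw [show w * (w ^ 2 + d * w + 1) = w ^ 2 * (w + w⁻¹ + d) by field_simp; ring,
          map_mul, quadraticChar_sq_one' hw0, one_mul]
    _ = _ := sum_erase _ (by simp)

end QuadraticCharSums

theorem jacobi_weierstrass_count_general (p : ℕ) [Fact p.Prime] (hp : 3 < p)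
    (l : ZMod p) (hl1 : l ≠ 1) (hlm1 : l ≠ -1) :
    (Finset.univ.filter (fun uv : ZMod p × ZMod p =>
        uv.2 ^ 2 = uv.1 ^ 4 + 2 * l * uv.1 ^ 2 + 1)).card + 1 =
      (Finset.univ.filter (fun xy : ZMod p × ZMod p =>
        xy.2 ^ 2 = xy.1 ^ 3 + 2 * l * xy.1 ^ 2 - 4 * xy.1 - 8 * l)).card := by
  have hF : ringChar (ZMod p) ≠ 2 := by rw [ZMod.ringChar_zmod_n]; omega
  have h2 : (2 : ZMod p) ≠ 0 := Ring.two_ne_zero hF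
  have hd : (2 * l) ^ 2 - 4 ≠ 0 := by
    rw [show (2 * l) ^ 2 - 4 = 2 * 2 * ((l - 1) * (l + 1)) by ring]
    exact mul_ne_zero (mul_ne_zero h2 h2)
      (mul_ne_zero (sub_ne_zero.mpr hl1) fun h => hlm1 (eq_neg_of_add_eq_zero_left h))
  have hcubic : ∀ x : ZMod p, x ^ 3 + 2 * l * x ^ 2 - 4 * x - 8 * l = (x ^ 2 - 4) * (x + 2 * l) :=
    fun x => by ring
  simp only [hcubic]
  have hquartic := card_filter_sq_eq hF fun u => u ^ 4 + 2 * l * u ^ 2 + 1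
  have hweierstrass := card_filter_sq_eq hF fun x => (x ^ 2 - 4) * (x + 2 * l)
  rw [sum_quadraticChar_quartic hF hd] at hquartic
  rw [sum_quadraticChar_cubic hF] at hweierstrass
  omega

theorem jacobi_weierstrass_count (p : ℕ) [Fact p.Prime] (hp : 3 < p)
    (l : ZMod p) (hl0 : l ≠ 0) (hl1 : l ≠ 1) (hlm1 : l ≠ -1) :
    (Finset.univ.filter (fun uv : ZMod p × ZMod p =>
        uv.2 ^ 2 = uv.1 ^ 4 + 2 * l * uv.1 ^ 2 + 1)).card + 1 =
      (Finset.univ.filter (fun xy : ZMod p × ZMod p =>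
        xy.2 ^ 2 = xy.1 ^ 3 + 2 * l * xy.1 ^ 2 - 4 * xy.1 - 8 * l)).card :=
  jacobi_weierstrass_count_general p hp l hl1 hlm1
end

section
/- Let p > 3 be a prime and d ∈ F_p with d ≠ −2, d ≠ 0 and d³ ≠ 1, and set k = (4/3)(d² + d + 1) ∈ F_p. Then #{(u, v) ∈ F_p × F_p : u³ + v³ + 1 = 3duv} = #{(x, y) ∈ F_p × F_p : y² = x³ + ((d+2)x + k)² and x ≠ −k}. -/
/-!
The Hessian cubic `u³ + v³ + 1 = 3duv` and the curve `y² = x³ + ((d+2)x + k)²` are birational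
via `x = -k(u+v+1)/(u+v+d)`, `y = k(d-1)(u-v)/(u+v+d)`, with inverse
`u, v = (±y - dx - k)/(2(x+k))`. The key point is that `u + v + d` and `x + k` are exchanged
up to the factor `k(d-1)`: `(u+v+d)(x+k) = k(d-1)`. Since `u³ + v³ + d³ - 3duv` is divisible by
`u + v + d`, the line `u + v + d = 0` meets the cubic only when `d³ = 1`, so the map is defined on
every affine point and its image avoids `x = -k`; hence it is a bijection of affine point sets.
-/

namespace HessianCurve

variable {F : Type*} [Field F]

def toWeierstrass (d k : F) (P : F × F) : F × F :=
  (-k * (P.1 + P.2 + 1) / (P.1 + P.2 + d), k * (d - 1) * (P.1 - P.2) / (P.1 + P.2 + d))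

def ofWeierstrass (d k : F) (Q : F × F) : F × F :=
  ((Q.2 - Q.1 * d - k) / (2 * (Q.1 + k)), (-Q.2 - Q.1 * d - k) / (2 * (Q.1 + k)))

variable {d k : F}

theorem add_add_ne_zero_of_hessian (hd : d ^ 3 ≠ 1) {u v : F}
    (h : u ^ 3 + v ^ 3 + 1 = 3 * d * u * v) : u + v + d ≠ 0 := by
  intro h0
  apply hd
  linear_combination (u ^ 2 + v ^ 2 + d ^ 2 - u * v - u * d - v * d) * h0 - h

theorem toWeierstrass_fst_add (P : F × F) (hs : P.1 + P.2 + d ≠ 0) :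
    (toWeierstrass d k P).1 + k = k * (d - 1) / (P.1 + P.2 + d) := by
  simp only [toWeierstrass]
  field_simp
  ring

theorem ofWeierstrass_add_add (h2 : (2 : F) ≠ 0) (Q : F × F) (hx : Q.1 + k ≠ 0) :
    (ofWeierstrass d k Q).1 + (ofWeierstrass d k Q).2 + d = k * (d - 1) / (Q.1 + k) := by
  simp only [ofWeierstrass]
  field_simp
  ring

theorem ofWeierstrass_toWeierstrass (h2 : (2 : F) ≠ 0) (hkd : k * (d - 1) ≠ 0) (P : F × F)
    (hs : P.1 + P.2 + d ≠ 0) : ofWeierstrass d k (toWeierstrass d k P) = P := by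
  have hx := toWeierstrass_fst_add (k := k) P hs
  have hxk : (toWeierstrass d k P).1 + k ≠ 0 := hx ▸ div_ne_zero hkd hs
  obtain ⟨u, v⟩ := P
  simp only [ofWeierstrass, toWeierstrass] at hs hxk ⊢
  ext <;> rw [div_eq_iff (mul_ne_zero h2 hxk)] <;> field_simp <;> ring

theorem toWeierstrass_ofWeierstrass (h2 : (2 : F) ≠ 0) (hkd : k * (d - 1) ≠ 0) (Q : F × F)
    (hx : Q.1 + k ≠ 0) : toWeierstrass d k (ofWeierstrass d k Q) = Q := by
  have hs := ofWeierstrass_add_add (d := d) h2 Q hx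
  have hs0 : (ofWeierstrass d k Q).1 + (ofWeierstrass d k Q).2 + d ≠ 0 := hs ▸ div_ne_zero hkd hx
  obtain ⟨x, y⟩ := Q
  simp only [ofWeierstrass, toWeierstrass] at hx hs0 ⊢
  ext <;> rw [div_eq_iff hs0] <;> field_simp <;> ring

theorem toWeierstrass_isCurvePoint (h3 : (3 : F) ≠ 0) (hk : k = 4 / 3 * (d ^ 2 + d + 1))
    {P : F × F} (hs : P.1 + P.2 + d ≠ 0) (h : P.1 ^ 3 + P.2 ^ 3 + 1 = 3 * d * P.1 * P.2) :
    (toWeierstrass d k P).2 ^ 2 =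
      (toWeierstrass d k P).1 ^ 3 + ((d + 2) * (toWeierstrass d k P).1 + k) ^ 2 := by
  obtain ⟨u, v⟩ := P
  simp only [toWeierstrass] at hs h ⊢
  subst hk
  field_simp
  linear_combination 64 * (d ^ 3 - 1) ^ 2 * h

theorem ofWeierstrass_isHessianPoint (h2 : (2 : F) ≠ 0) (h3 : (3 : F) ≠ 0)
    (hk : k = 4 / 3 * (d ^ 2 + d + 1)) {Q : F × F} (hx : Q.1 + k ≠ 0)
    (h : Q.2 ^ 2 = Q.1 ^ 3 + ((d + 2) * Q.1 + k) ^ 2) :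
    (ofWeierstrass d k Q).1 ^ 3 + (ofWeierstrass d k Q).2 ^ 3 + 1 =
      3 * d * (ofWeierstrass d k Q).1 * (ofWeierstrass d k Q).2 := by
  obtain ⟨x, y⟩ := Q
  simp only [ofWeierstrass] at hx h ⊢
  field_simp
  subst hk
  field_simp at h ⊢
  linear_combination 24 * (d ^ 3 - 1) * h

theorem mul_sub_one_ne_zero (h2 : (2 : F) ≠ 0) (h3 : (3 : F) ≠ 0) (hd : d ^ 3 ≠ 1)
    (hk : k = 4 / 3 * (d ^ 2 + d + 1)) : k * (d - 1) ≠ 0 := by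
  have h4 : (4 : F) ≠ 0 := by simpa [show (4 : F) = 2 * 2 by norm_num] using mul_ne_zero h2 h2
  have hkd : k * (d - 1) = 4 / 3 * (d ^ 3 - 1) := by rw [hk]; ring
  rw [hkd]
  exact mul_ne_zero (div_ne_zero h4 h3) (sub_ne_zero.mpr hd)

theorem card_hessian_eq_card_curve [Fintype F] [DecidableEq F] (h2 : (2 : F) ≠ 0)
    (h3 : (3 : F) ≠ 0) (hd : d ^ 3 ≠ 1) (hk : k = 4 / 3 * (d ^ 2 + d + 1)) :
    (Finset.univ.filter (fun P : F × F => P.1 ^ 3 + P.2 ^ 3 + 1 = 3 * d * P.1 * P.2)).card =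
      (Finset.univ.filter (fun Q : F × F =>
        Q.2 ^ 2 = Q.1 ^ 3 + ((d + 2) * Q.1 + k) ^ 2 ∧ Q.1 ≠ -k)).card := by
  have hkd := mul_sub_one_ne_zero h2 h3 hd hk
  have hxk {x : F} : x ≠ -k ↔ x + k ≠ 0 := not_congr eq_neg_iff_add_eq_zero
  apply Finset.card_nbij' (toWeierstrass d k) (ofWeierstrass d k) <;>
    intro P hP <;> simp only [Finset.mem_coe, Finset.mem_filter, Finset.mem_univ, true_and] at hP ⊢
  · have hs := add_add_ne_zero_of_hessian hd hP
    refine ⟨toWeierstrass_isCurvePoint h3 hk hs hP, hxk.mpr ?_⟩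
    rw [toWeierstrass_fst_add P hs]
    exact div_ne_zero hkd hs
  · exact ofWeierstrass_isHessianPoint h2 h3 hk (hxk.mp hP.2) hP.1
  · exact ofWeierstrass_toWeierstrass h2 hkd P (add_add_ne_zero_of_hessian hd hP)
  · exact toWeierstrass_ofWeierstrass h2 hkd P (hxk.mp hP.2)

end HessianCurve

theorem ZMod.natCast_ne_zero_of_lt {p n : ℕ} (h0 : 0 < n) (h : n < p) : (n : ZMod p) ≠ 0 := by
  rw [Ne, ZMod.natCast_eq_zero_iff]
  exact fun hdvd => (Nat.le_of_dvd h0 hdvd).not_gt h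

theorem hessian_count_eq_tildeE_count_general (p : ℕ) [Fact p.Prime] (hp : 3 < p)
    (d : ZMod p) (hd : d ^ 3 ≠ 1)
    (k : ZMod p) (hk : k = 4 / 3 * (d ^ 2 + d + 1)) :
    (Finset.univ.filter (fun uv : ZMod p × ZMod p =>
        uv.1 ^ 3 + uv.2 ^ 3 + 1 = 3 * d * uv.1 * uv.2)).card =
      (Finset.univ.filter (fun xy : ZMod p × ZMod p =>
        xy.2 ^ 2 = xy.1 ^ 3 + ((d + 2) * xy.1 + k) ^ 2 ∧ xy.1 ≠ -k)).card := by
  have h2 : (2 : ZMod p) ≠ 0 := by exact_mod_cast ZMod.natCast_ne_zero_of_lt two_pos (by omega)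
  have h3 : (3 : ZMod p) ≠ 0 := by exact_mod_cast ZMod.natCast_ne_zero_of_lt three_pos hp
  exact HessianCurve.card_hessian_eq_card_curve h2 h3 hd hk

theorem hessian_count_eq_tildeE_count (p : ℕ) [Fact p.Prime] (hp : 3 < p)
    (d : ZMod p) (hd2 : d ≠ -2) (hd0 : d ≠ 0) (hd : d ^ 3 ≠ 1)
    (k : ZMod p) (hk : k = 4 / 3 * (d ^ 2 + d + 1)) :
    (Finset.univ.filter (fun uv : ZMod p × ZMod p =>
        uv.1 ^ 3 + uv.2 ^ 3 + 1 = 3 * d * uv.1 * uv.2)).card =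
      (Finset.univ.filter (fun xy : ZMod p × ZMod p =>
        xy.2 ^ 2 = xy.1 ^ 3 + ((d + 2) * xy.1 + k) ^ 2 ∧ xy.1 ≠ -k)).card :=
  hessian_count_eq_tildeE_count_general p hp d hd k hk
end

section
/- Let p > 3 be a prime and d ∈ F_p with d ≠ −2, d ≠ 0 and d³ ≠ 1. Set k = (4/3)(d² + d + 1) ∈ F_p and λ = (d+2)³/(3k) ∈ F_p. If there exists c ∈ F_p with c ≠ 0 and c² = k/(d+2), then #{(x, y) ∈ F_p × F_p : y² = x³ + ((d+2)x + k)²} = #{(x, y) ∈ F_p × F_p : y² = x³ + 3λ(x + 1)²}. -/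
open Finset

/-- The bijection is the weighted scaling `(x, y) ↦ (x / u², y / u³)`. -/
theorem card_filter_sq_eq_cube_add_scale {K : Type*} [Field K] [Fintype K] [DecidableEq K]
    (f : K → K) {u : K} (hu : u ≠ 0) :
    #{xy : K × K | xy.2 ^ 2 = xy.1 ^ 3 + f xy.1} =
      #{xy : K × K | xy.2 ^ 2 = xy.1 ^ 3 + f (u ^ 2 * xy.1) / u ^ 6} := by
  refine card_nbij' (fun xy => (xy.1 / u ^ 2, xy.2 / u ^ 3)) (fun xy => (u ^ 2 * xy.1, u ^ 3 * xy.2))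
    ?_ ?_ ?_ ?_
  · intro xy hxy
    simp only [coe_filter, mem_univ, true_and, Set.mem_ofPred_eq] at hxy ⊢
    rw [mul_div_cancel₀ _ (pow_ne_zero 2 hu), div_pow, div_pow, hxy]
    ring
  · intro xy hxy
    simp only [coe_filter, mem_univ, true_and, Set.mem_ofPred_eq] at hxy ⊢
    rw [mul_pow, mul_pow, hxy]
    field_simp
  · intro xy _
    ext <;> field_simp
  · intro xy _
    ext <;> field_simp

theorem tildeE_count_eq_dik_count_general (p : ℕ) [Fact p.Prime] (hp : 3 < p)
    (d : ZMod p) (hd2 : d ≠ -2)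
    (k : ZMod p)
    (l : ZMod p) (hl : l = (d + 2) ^ 3 / (3 * k))
    (hc : ∃ c : ZMod p, c ≠ 0 ∧ c ^ 2 = k / (d + 2)) :
    (Finset.univ.filter (fun xy : ZMod p × ZMod p =>
        xy.2 ^ 2 = xy.1 ^ 3 + ((d + 2) * xy.1 + k) ^ 2)).card =
      (Finset.univ.filter (fun xy : ZMod p × ZMod p =>
        xy.2 ^ 2 = xy.1 ^ 3 + 3 * l * (xy.1 + 1) ^ 2)).card := by
  obtain ⟨c, hc0, hc2⟩ := hc
  have hd2_add : d + 2 ≠ 0 := fun h => hd2 (eq_neg_of_add_eq_zero_left h)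
  have h3 : (3 : ZMod p) ≠ 0 := by
    rw [← Nat.cast_ofNat, Ne, ZMod.natCast_eq_zero_iff]
    exact fun h => absurd (Nat.le_of_dvd three_pos h) (by omega)
  have hk : k = c ^ 2 * (d + 2) := by
    rw [hc2, div_mul_cancel₀ _ hd2_add]
  -- Scaling by `c` turns `((d + 2) x + c² (d + 2))²` into `c⁴ (d + 2)² (x + 1)²`, and `3 l = (d + 2)² / c²`.
  refine (card_filter_sq_eq_cube_add_scale (fun x => ((d + 2) * x + k) ^ 2) hc0).trans ?_
  congr! 3 with xy
  rw [hl, hk]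
  field_simp

theorem tildeE_count_eq_dik_count (p : ℕ) [Fact p.Prime] (hp : 3 < p)
    (d : ZMod p) (hd2 : d ≠ -2) (hd0 : d ≠ 0) (hd : d ^ 3 ≠ 1)
    (k : ZMod p) (hk : k = 4 / 3 * (d ^ 2 + d + 1))
    (l : ZMod p) (hl : l = (d + 2) ^ 3 / (3 * k))
    (hc : ∃ c : ZMod p, c ≠ 0 ∧ c ^ 2 = k / (d + 2)) :
    (Finset.univ.filter (fun xy : ZMod p × ZMod p =>
        xy.2 ^ 2 = xy.1 ^ 3 + ((d + 2) * xy.1 + k) ^ 2)).card =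
      (Finset.univ.filter (fun xy : ZMod p × ZMod p =>
        xy.2 ^ 2 = xy.1 ^ 3 + 3 * l * (xy.1 + 1) ^ 2)).card :=
  tildeE_count_eq_dik_count_general p hp d hd2 k l hl hc
end

section
/- Let p > 3 be a prime, θ a nontrivial additive character of F_p with values in ℂ, and λ ∈ F_p with λ ∉ {0, 1, −1}. Then (φ(−1)·g(φ)/(p−1)) · Σ_χ g(χ⁻¹)·g(χ²)·g(χ⁻¹·φ)·χ⁻¹(4λ²) = −2p, where the sum runs over all multiplicative characters χ of F_p. -/
/-!
Expanding the three Gauss sums and summing over `χ` first, orthogonality of characters leaves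
only the triples `(x, y, z)` with `x = y² / (4λ²z)`, so the character sum becomes
`(p - 1) Σ_{y ≠ 0} Σ_z φ(z) θ(y²/(4λ²z) + y + z)`. The substitution `y = 2λzt` turns the
argument of `θ` into `z (t² + 2λt + 1)`, and the `z`-sum is then `φ(t² + 2λt + 1) g(φ)`.
Completing the square and using the Jacobi sum `J(φ, φ) = -φ(-1)`, the nonzero discriminant
`4(λ² - 1)` gives `Σ_t φ(t² + 2λt + 1) = -1`, so the sum over `t ≠ 0` is `-2`; together with `g(φ)² = φ(-1) p` this gives `-2p`.
-/

open Finset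

namespace MulChar

variable {M R : Type*} [CommMonoid M] [Fintype M] [DecidableEq M] [CommRing R] [IsDomain R]
  [HasEnoughRootsOfUnity R (Monoid.exponent Mˣ)]

theorem sum_apply_eq_ite [Fintype (MulChar M R)] (a : M) :
    ∑ χ : MulChar M R, χ a = if a = 1 then (Fintype.card Mˣ : R) else 0 := by
  split_ifs with ha
  · simp only [ha, map_one, sum_const, card_univ, nsmul_eq_mul, mul_one]
    rw [← Nat.card_eq_fintype_card, card_eq_card_units_of_hasEnoughRootsOfUnity,
      Nat.card_eq_fintype_card]
  · obtain ⟨χ, hχ⟩ := exists_apply_ne_one_of_hasEnoughRootsOfUnity M R ha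
    refine eq_zero_of_mul_eq_self_left hχ ?_
    simp only [mul_sum, ← mul_apply]
    exact Fintype.sum_bijective _ (Group.mulLeft_bijective χ) _ _ fun _ ↦ rfl

end MulChar

section GroupWithZero

variable {G M : Type*} [GroupWithZero G] [Fintype G] [DecidableEq G] [AddCommMonoid M]

theorem sum_ite_inv_mul_eq_one (f : G → M) (a : G) :
    ∑ x, (if x⁻¹ * a = 1 then f x else 0) = if a = 0 then 0 else f a := by
  rcases eq_or_ne a 0 with rfl | ha
  · simp
  · have hiff : ∀ x : G, x⁻¹ * a = 1 ↔ a = x := fun x ↦ by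
      rcases eq_or_ne x 0 with rfl | hx
      · simp [ha]
      · rw [inv_mul_eq_one₀ hx, eq_comm]
    simp [hiff, ha]

theorem sum_erase_zero_comp_mul_left (f : G → M) {a : G} (ha : a ≠ 0) :
    ∑ y ∈ univ.erase 0, f y = ∑ t ∈ univ.erase 0, f (a * t) := by
  refine sum_nbij' (a⁻¹ * ·) (a * ·) ?_ ?_ ?_ ?_ ?_ <;> simp [ha]

end GroupWithZero

theorem gaussSum_mul_gaussSum_mul_gaussSum {R R' : Type*} [CommRing R] [Fintype R] [CommRing R']
    (χ₁ χ₂ χ₃ : MulChar R R') (θ : AddChar R R') :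
    gaussSum χ₁ θ * gaussSum χ₂ θ * gaussSum χ₃ θ =
      ∑ x, ∑ y, ∑ z, χ₁ x * χ₂ y * χ₃ z * θ (x + y + z) := by
  rw [gaussSum, gaussSum, gaussSum, sum_mul_sum]
  simp_rw [sum_mul, mul_sum, AddChar.map_add_eq_mul]
  exact sum_congr rfl fun _ _ ↦ sum_congr rfl fun _ _ ↦ sum_congr rfl fun _ _ ↦ by ring

section FiniteField

variable {F R : Type*} [Field F] [Fintype F] [CommRing R] [IsDomain R]

theorem sum_mulChar_mul_addChar_mul {χ : MulChar F R} (hχ : χ ≠ 1) (θ : AddChar F R) (u : F) :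
    ∑ z, χ z * θ (z * u) = χ⁻¹ u * gaussSum χ θ := by
  rcases eq_or_ne u 0 with rfl | hu
  · simpa [MulChar.map_zero] using χ.sum_eq_zero_of_ne_one hχ
  · rw [← Units.val_mk0 hu, ← gaussSum_mulShift_eq]
    simp [gaussSum, AddChar.mulShift_apply, mul_comm]

variable [DecidableEq F]

theorem sum_gaussSum_mul_gaussSum_sq_mul_gaussSum_eq_sum_addChar
    [HasEnoughRootsOfUnity R (Monoid.exponent Fˣ)] [Fintype (MulChar F R)]
    (ψ : MulChar F R) (θ : AddChar F R) {c : F} (hc : c ≠ 0) :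
    ∑ χ : MulChar F R,
        gaussSum χ⁻¹ θ * gaussSum (χ ^ 2) θ * gaussSum (χ⁻¹ * ψ) θ * χ⁻¹ (c ^ 2) =
      Fintype.card Fˣ * ∑ y ∈ univ.erase 0, ∑ z, ψ z * θ (y ^ 2 * z⁻¹ * (c ^ 2)⁻¹ + y + z) := by
  -- with `0⁻¹ = 0` the argument of `χ` vanishes exactly when `x`, `y` or `z` does
  have hterm : ∀ (χ : MulChar F R) x y z,
      χ⁻¹ x * (χ ^ 2) y * (χ⁻¹ * ψ) z * θ (x + y + z) * χ⁻¹ (c ^ 2) =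
        χ (x⁻¹ * (y ^ 2 * z⁻¹ * (c ^ 2)⁻¹)) * (ψ z * θ (x + y + z)) := fun χ x y z ↦ by
    simp only [MulChar.inv_apply', MulChar.mul_apply, MulChar.pow_apply' χ two_ne_zero, map_mul,
      ← inv_pow, map_pow]
    ring
  calc
    _ = ∑ y, ∑ z, ∑ x, (∑ χ : MulChar F R, χ (x⁻¹ * (y ^ 2 * z⁻¹ * (c ^ 2)⁻¹))) *
          (ψ z * θ (x + y + z)) := by
      simp_rw [gaussSum_mul_gaussSum_mul_gaussSum, sum_mul, hterm,
        sum_comm (s := (univ : Finset (MulChar F R)))]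
      rw [sum_comm_cycle, sum_comm_cycle]
    _ = ∑ y, ∑ z, if y ^ 2 * z⁻¹ * (c ^ 2)⁻¹ = 0 then 0 else
          (Fintype.card Fˣ : R) * (ψ z * θ (y ^ 2 * z⁻¹ * (c ^ 2)⁻¹ + y + z)) := by
      simp_rw [MulChar.sum_apply_eq_ite, ite_mul, zero_mul, sum_ite_inv_mul_eq_one]
    _ = _ := by
      rw [mul_sum, ← sum_erase univ (a := 0)]
      · refine sum_congr rfl fun y hy ↦ ?_
        rw [mul_sum]
        refine sum_congr rfl fun z _ ↦ ?_
        rcases eq_or_ne z 0 with rfl | hz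
        · simp [MulChar.map_zero]
        · simp [ne_of_mem_erase hy, hz, hc]
      · simp

theorem sum_erase_zero_sum_mulChar_mul_addChar {ψ : MulChar F R} (hψ : ψ ≠ 1)
    (θ : AddChar F R) {c : F} (hc : c ≠ 0) :
    ∑ y ∈ univ.erase 0, ∑ z, ψ z * θ (y ^ 2 * z⁻¹ * (c ^ 2)⁻¹ + y + z) =
      gaussSum ψ θ * ∑ t ∈ univ.erase 0, ψ⁻¹ (t ^ 2 + c * t + 1) := by
  calc
    _ = ∑ z, ∑ t ∈ univ.erase 0, ψ z * θ (z * (t ^ 2 + c * t + 1)) := by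
      rw [sum_comm]
      refine sum_congr rfl fun z _ ↦ ?_
      rcases eq_or_ne z 0 with rfl | hz
      · simp [MulChar.map_zero]
      · rw [sum_erase_zero_comp_mul_left _ (mul_ne_zero hc hz)]
        refine sum_congr rfl fun t _ ↦ ?_
        congr 2
        field_simp
    _ = _ := by
      rw [sum_comm, mul_sum]
      simp_rw [sum_mulChar_mul_addChar_mul hψ, mul_comm]

theorem sum_gaussSum_mul_gaussSum_sq_mul_gaussSum
    [HasEnoughRootsOfUnity R (Monoid.exponent Fˣ)] [Fintype (MulChar F R)]
    {ψ : MulChar F R} (hψ : ψ ≠ 1) (θ : AddChar F R) {c : F} (hc : c ≠ 0) :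
    ∑ χ : MulChar F R,
        gaussSum χ⁻¹ θ * gaussSum (χ ^ 2) θ * gaussSum (χ⁻¹ * ψ) θ * χ⁻¹ (c ^ 2) =
      Fintype.card Fˣ * gaussSum ψ θ * ∑ t ∈ univ.erase 0, ψ⁻¹ (t ^ 2 + c * t + 1) := by
  rw [sum_gaussSum_mul_gaussSum_sq_mul_gaussSum_eq_sum_addChar ψ θ hc,
    sum_erase_zero_sum_mulChar_mul_addChar hψ θ hc, mul_assoc]

end FiniteField

section QuadraticChar

variable {F : Type*} [Field F] [Fintype F] [DecidableEq F]

theorem sum_comp_sq_eq_sum_quadraticChar_add_one_smul (hF : ringChar F ≠ 2) {M : Type*}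
    [AddCommGroup M] (f : F → M) :
    ∑ s, f (s ^ 2) = ∑ u, (quadraticChar F u + 1) • f u := by
  rw [← sum_fiberwise_of_maps_to (g := fun s ↦ s ^ 2) (t := univ) (fun _ _ ↦ mem_univ _)]
  refine sum_congr rfl fun u _ ↦ ?_
  rw [sum_congr rfl fun s hs ↦ by rw [(mem_filter.mp hs).2], sum_const,
    ← quadraticChar_card_sqrts hF u, Set.toFinset_ofPred, natCast_zsmul]

theorem quadraticChar_sum_mul_add (hF : ringChar F ≠ 2) {d : F} (hd : d ≠ 0) :
    ∑ u, quadraticChar F u * quadraticChar F (u + d) = -1 := by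
  set χ := quadraticChar F
  have hJ : jacobiSum χ χ = -χ (-1) := by
    have := jacobiSum_nontrivial_inv (quadraticChar_ne_one hF)
    rwa [(quadraticChar_isQuadratic F).inv] at this
  calc
    _ = ∑ v, χ (-d * v) * χ (-d * v + d) :=
      (Equiv.sum_comp (Equiv.mulLeft₀ (-d) (neg_ne_zero.mpr hd)) _).symm
    _ = ∑ v, χ (-1) * χ d ^ 2 * (χ v * χ (1 - v)) := by
      refine sum_congr rfl fun v _ ↦ ?_
      rw [show -d * v = -1 * d * v by ring, show -1 * d * v + d = d * (1 - v) by ring]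
      simp only [map_mul]
      ring
    _ = -1 := by
      rw [← mul_sum, ← jacobiSum, hJ, quadraticChar_sq_one hd]
      linear_combination -quadraticChar_sq_one (neg_ne_zero.mpr (one_ne_zero' F))

theorem quadraticChar_sum_sq_add (hF : ringChar F ≠ 2) {d : F} (hd : d ≠ 0) :
    ∑ s, quadraticChar F (s ^ 2 + d) = -1 := by
  have hshift : ∑ u, quadraticChar F (u + d) = 0 :=
    (Equiv.sum_comp (Equiv.addRight d) (quadraticChar F)).trans (quadraticChar_sum_zero hF)
  simp_rw [sum_comp_sq_eq_sum_quadraticChar_add_one_smul hF (fun u ↦ quadraticChar F (u + d)),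
    smul_eq_mul, add_mul, one_mul, sum_add_distrib, hshift, add_zero,
    quadraticChar_sum_mul_add hF hd]

theorem quadraticChar_sum_sq_add_two_mul_add_one (hF : ringChar F ≠ 2) {l : F} (hl1 : l ≠ 1)
    (hlm1 : l ≠ -1) :
    ∑ t, quadraticChar F (t ^ 2 + 2 * l * t + 1) = -1 := by
  have hd : 1 - l ^ 2 ≠ 0 := by
    rw [show 1 - l ^ 2 = (1 - l) * (1 + l) by ring]
    exact mul_ne_zero (sub_ne_zero.mpr hl1.symm) fun h ↦ hlm1 (by linear_combination h)
  rw [← quadraticChar_sum_sq_add hF hd,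
    ← Equiv.sum_comp (Equiv.addRight l) (fun s ↦ quadraticChar F (s ^ 2 + (1 - l ^ 2)))]
  exact sum_congr rfl fun t _ ↦ by simp only [Equiv.coe_addRight]; ring_nf

end QuadraticChar

theorem gauss_sum_A1 (p : ℕ) [Fact p.Prime] (hp : 3 < p)
    (θ : AddChar (ZMod p) ℂ) (hθ : θ ≠ 1)
    (l : ZMod p) (hl0 : l ≠ 0) (hl1 : l ≠ 1) (hlm1 : l ≠ -1) :
    letI φ : MulChar (ZMod p) ℂ := (quadraticChar (ZMod p)).ringHomComp (Int.castRingHom ℂ)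
    (φ (-1) * gaussSum φ θ / ((p : ℂ) - 1)) *
        ∑ᶠ χ : MulChar (ZMod p) ℂ,
          gaussSum χ⁻¹ θ * gaussSum (χ ^ 2) θ * gaussSum (χ⁻¹ * φ) θ * χ⁻¹ (4 * l ^ 2) =
      -2 * (p : ℂ) := by
  set φ : MulChar (ZMod p) ℂ := (quadraticChar (ZMod p)).ringHomComp (Int.castRingHom ℂ)
  have hF : ringChar (ZMod p) ≠ 2 := by rw [ZMod.ringChar_zmod_n]; omega
  have hφ : φ.IsQuadratic := (quadraticChar_isQuadratic _).comp _
  have hφ1 : φ ≠ 1 :=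
    (MulChar.ringHomComp_ne_one_iff (RingHom.injective_int _)).mpr (quadraticChar_ne_one hF)
  have hgauss : gaussSum φ θ ^ 2 = φ (-1) * p := by
    simpa using gaussSum_sq hφ1 hφ (AddChar.IsPrimitive.of_ne_one hθ)
  have hφm1 : φ (-1) ^ 2 = 1 := by
    rw [← MulChar.pow_apply' φ two_ne_zero, hφ.sq_eq_one, MulChar.one_apply isUnit_one.neg]
  have hsum : ∑ t ∈ univ.erase 0, φ⁻¹ (t ^ 2 + 2 * l * t + 1) = -2 := by
    have hcast : ∀ x, φ x = (quadraticChar (ZMod p) x : ℂ) := fun _ ↦ rfl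
    rw [hφ.inv, sum_erase_eq_sub (mem_univ 0)]
    simp only [hcast, ← Int.cast_sum, quadraticChar_sum_sq_add_two_mul_add_one hF hl1 hlm1]
    norm_num
  have hunits : (Fintype.card (ZMod p)ˣ : ℂ) = p - 1 := by
    rw [ZMod.card_units, Nat.cast_sub (Fact.out : p.Prime).one_le, Nat.cast_one]
  have hp1 : (p : ℂ) - 1 ≠ 0 := by
    rw [← hunits, Nat.cast_ne_zero]; exact Fintype.card_ne_zero
  rw [finsum_eq_sum_of_fintype, show (4 * l ^ 2 : ZMod p) = (2 * l) ^ 2 by ring,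
    sum_gaussSum_mul_gaussSum_sq_mul_gaussSum hφ1 θ (mul_ne_zero (Ring.two_ne_zero hF) hl0),
    hsum, hunits]
  field_simp
  linear_combination -φ (-1) * hgauss - p * hφm1
end
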